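/- arXiv:0705.1411 — 9 statements merged into one kernel-verified Lean document; each statement's English description precedes it below -/
import Mathlib

section
/- The first supertransvectant (contact bracket) makes the space of homogeneous weighted densities on the supercircle into a Lie superalgebra: for all homogeneous densities f ∈ F_λ, g ∈ F_μ, h ∈ F_ν (of arbitrary parities σ(f), σ(g), σ(h) and arbitrary real weights λ, μ, ν) one has super skew-symmetry [f,g] = −(−1)^{σ(f)σ(g)}[g,f] and the super Jacobi identity (−1)^{σ(f)σ(h)}[f,[g,h]] + (−1)^{σ(g)σ(f)}[g,[h,f]] + (−1)^{σ(h)σ(g)}[h,[f,g]] = 0, where the bracket maps F_λ ⊗ F_μ into F_{λ+μ+1}. -/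
/-- Homogeneous superfunction on the supercircle `S^{1|1}`:
a pair `(f, ε)` representing `f(x)` if `ε = 0` and `ξ·f(x)` if `ε = 1`. -/
structure SF where
  fn : ℝ → ℝ
  par : ZMod 2

/-- Product of homogeneous superfunctions: `(f,ε)·(g,δ) = (f·g, ε+δ)`,
with `(f,1)·(g,1) = 0` since `ξ² = 0`. -/
noncomputable def SF.mul (f g : SF) : SF :=
  ⟨fun x => if f.par = 1 ∧ g.par = 1 then 0 else f.fn x * g.fn x, f.par + g.par⟩

noncomputable def SF.smul (c : ℝ) (f : SF) : SF := ⟨fun x => c * f.fn x, f.par⟩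

noncomputable def SF.add (f g : SF) : SF := ⟨fun x => f.fn x + g.fn x, f.par⟩

noncomputable def SF.sub (f g : SF) : SF := ⟨fun x => f.fn x - g.fn x, f.par⟩

noncomputable def SF.neg (f : SF) : SF := ⟨fun x => - f.fn x, f.par⟩

/-- Even derivative `(f,ε)' = (f',ε)`. -/
noncomputable def SF.dx (f : SF) : SF := ⟨deriv f.fn, f.par⟩

/-- The odd derivative `D̄ = ∂_ξ - ξ ∂_x`: `D̄(f,0) = (-f',1)`, `D̄(f,1) = (f,0)`. -/
noncomputable def Dbar (f : SF) : SF :=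
  if f.par = 0 then ⟨fun x => - deriv f.fn x, 1⟩ else ⟨f.fn, 0⟩

/-- `(-1)^ε`. -/
def sgn (e : ZMod 2) : ℝ := if e = 0 then 1 else -1

/-- `(-1)^(a·b)`. -/
def sgn2 (a b : ZMod 2) : ℝ := if a = 1 ∧ b = 1 then -1 else 1

/-- The first supertransvectant (contact bracket)
`[f,g] = μ f′ g − λ f g′ − (−1)^{σ(f)} (1/2) D̄(f)·D̄(g)` on `F_λ ⊗ F_μ`. -/
noncomputable def cbr (l m : ℝ) (f g : SF) : SF :=
  SF.sub (SF.sub (SF.smul m (SF.mul f.dx g)) (SF.smul l (SF.mul f g.dx)))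
    (SF.smul (sgn f.par * (1/2)) (SF.mul (Dbar f) (Dbar g)))

/-- The odd supertransvectant (ghost bracket)
`(f,g) = μ D̄(f)·g − (−1)^{σ(f)} λ f·D̄(g)` on `F_λ ⊗ F_μ`. -/
noncomputable def gbr (l m : ℝ) (f g : SF) : SF :=
  SF.sub (SF.smul m (SF.mul (Dbar f) g)) (SF.smul (sgn f.par * l) (SF.mul f (Dbar g)))


lemma zmod2_cases (a : ZMod 2) : a = 0 ∨ a = 1 := by revert a; decide

lemma smooth_pack {F : ℝ → ℝ} (hF : ContDiff ℝ (⊤ : ℕ∞) F) :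
    Differentiable ℝ F ∧ Differentiable ℝ (deriv F) ∧ Differentiable ℝ (deriv (deriv F)) := by
  have h1 : ContDiff ℝ (⊤ : ℕ∞) F := hF.of_le (by simp)
  have h2 := (contDiff_infty_iff_deriv.mp h1)
  have h3 := (contDiff_infty_iff_deriv.mp h2.2)
  have h4 := (contDiff_infty_iff_deriv.mp h3.2)
  exact ⟨h2.1, h3.1, h4.1⟩

/-- the contact bracket (first supertransvectant) makes the homogeneous
weighted densities into a Lie superalgebra: super skew-symmetry and the super Jacobi
identity hold, the bracket mapping `F_λ ⊗ F_μ → F_{λ+μ+1}`. -/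
theorem contact_bracket_lie_superalgebra (l m n : ℝ) (f g h : SF)
    (hf : ContDiff ℝ (⊤ : ℕ∞) f.fn) (hg : ContDiff ℝ (⊤ : ℕ∞) g.fn) (hh : ContDiff ℝ (⊤ : ℕ∞) h.fn) :
    cbr l m f g = SF.neg (SF.smul (sgn2 f.par g.par) (cbr m l g f)) ∧
    SF.add (SF.add
        (SF.smul (sgn2 f.par h.par) (cbr l (m + n + 1) f (cbr m n g h)))
        (SF.smul (sgn2 g.par f.par) (cbr m (n + l + 1) g (cbr n l h f))))
      (SF.smul (sgn2 h.par g.par) (cbr n (l + m + 1) h (cbr l m f g)))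
      = ⟨fun _ => 0, f.par + g.par + h.par⟩ := by
  obtain ⟨F, a⟩ := f
  obtain ⟨G, b⟩ := g
  obtain ⟨H, c⟩ := h
  simp only at hf hg hh
  obtain ⟨hF, hF', hF''⟩ := smooth_pack hf
  obtain ⟨hG, hG', hG''⟩ := smooth_pack hg
  obtain ⟨hH, hH', hH''⟩ := smooth_pack hh
  have z1 : ((0:ZMod 2) = 1) = False := by decide
  have z2 : ((1:ZMod 2) = 0) = False := by decide
  have z3 : ((1:ZMod 2) = 1) = True := by decide
  have z4 : ((0:ZMod 2) = 0) = True := by decide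
  have a1 : (0:ZMod 2) + 0 = 0 := by decide
  have a2 : (0:ZMod 2) + 1 = 1 := by decide
  have a3 : (1:ZMod 2) + 0 = 1 := by decide
  have a4 : (1:ZMod 2) + 1 = 0 := by decide
  rcases zmod2_cases a with rfl | rfl <;> rcases zmod2_cases b with rfl | rfl <;>
    rcases zmod2_cases c with rfl | rfl <;> refine ⟨?_, ?_⟩ <;>
  · simp only [cbr, Dbar, SF.mul, SF.smul, SF.sub, SF.add, SF.neg, SF.dx, sgn, sgn2,
      a1, a2, a3, a4, z1, z2, z3, z4, if_true, if_false, true_and, false_and, and_true,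
      and_false, one_mul, neg_mul, mul_zero, mul_neg, neg_neg]
    refine congrArg₂ SF.mk ?_ rfl
    funext x
    simp (config := { failIfUnchanged := false }) (disch := fun_prop) only [deriv_fun_sub,
      deriv_fun_add, deriv_fun_mul, deriv_const_mul, deriv.fun_neg, deriv_const', zero_mul, mul_zero,
      zero_add, add_zero, zero_sub, sub_zero, neg_neg, mul_neg, neg_mul]
    try ring
end

section
/- The odd supertransvectant (ghost bracket) on weighted densities is invariant under the conformal superalgebra K(1) = F_{−1}: for every homogeneous density f ∈ F_{−1} and all homogeneous densities g ∈ F_μ, h ∈ F_ν (arbitrary parities and real weights μ, ν) one has [f,(g,h)] = (−1)^{σ(f)}([f,g],h) + (−1)^{σ(f)(σ(g)+1)}(g,[f,h]). -/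
set_option maxHeartbeats 1000000 in
/-- the ghost bracket is invariant under the conformal superalgebra
`K(1) = F_{-1}`: `[f,(g,h)] = (−1)^{σ(f)} ([f,g],h) + (−1)^{σ(f)(σ(g)+1)} (g,[f,h])`
for `f ∈ F_{-1}`, `g ∈ F_μ`, `h ∈ F_ν`. -/
theorem ghost_bracket_K1_invariant (m n : ℝ) (f g h : SF)
    (hf : ContDiff ℝ (⊤ : ℕ∞) f.fn) (hg : ContDiff ℝ (⊤ : ℕ∞) g.fn) (hh : ContDiff ℝ (⊤ : ℕ∞) h.fn) :
    cbr (-1) (m + n + 1/2) f (gbr m n g h)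
      = SF.add (SF.smul (sgn f.par) (gbr m n (cbr (-1) m f g) h))
          (SF.smul (sgn2 f.par (g.par + 1)) (gbr m n g (cbr (-1) n f h))) := by
  obtain ⟨F, a⟩ := f
  obtain ⟨G, b⟩ := g
  obtain ⟨H, c⟩ := h
  simp only at hf hg hh
  have hF' : Differentiable ℝ (deriv F) := (contDiff_infty_iff_deriv.mp (hf.of_le (by simp))).2.differentiable (by simp)
  have hG' : Differentiable ℝ (deriv G) := (contDiff_infty_iff_deriv.mp (hg.of_le (by simp))).2.differentiable (by simp)
  have hH' : Differentiable ℝ (deriv H) := (contDiff_infty_iff_deriv.mp (hh.of_le (by simp))).2.differentiable (by simp)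
  have hFd : Differentiable ℝ F := hf.differentiable (by simp)
  have hGd : Differentiable ℝ G := hg.differentiable (by simp)
  have hHd : Differentiable ℝ H := hh.differentiable (by simp)
  rcases zmod2_cases a with ha | ha <;> rcases zmod2_cases b with hb | hb <;>
    rcases zmod2_cases c with hc | hc <;> subst ha hb hc <;>
    · simp only [cbr, gbr, Dbar, SF.mul, SF.smul, SF.add, SF.sub, SF.dx, sgn, sgn2]
      simp [show (2:ZMod 2) = 0 from by decide, show (3:ZMod 2) = 1 from by decide,
        show (1:ZMod 2) + 1 = 0 from by decide, SF.mk.injEq, funext_iff]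
      intro x
      try simp (disch := fun_prop) only [deriv_add, deriv_sub, deriv_mul, deriv_const_mul,
        deriv_fun_add, deriv_fun_sub, deriv_fun_mul, deriv.fun_neg, deriv.neg, deriv_neg, deriv_const']
      ring
end

section
/- The ghost Poisson bracket on ℝ^{2|1} is invariant with respect to the conformal superalgebra K(1): for every parity-homogeneous superfunction F on ℝ^{2|1} that is homogeneous of degree 2 for the Euler field (componentwise: E₀F = 2F if F has parity 0, and E₀F = F if F has parity 1, where E₀ = p∂_p + q∂_q), and for all parity-homogeneous superfunctions G, H, one has {F, {G,H}_g} = (−1)^{σ(F)} {{F,G}, H}_g + (−1)^{σ(F)(σ(G)+1)} {G, {F,H}}_g, where {·,·} is the super Poisson bracket and {·,·}_g the ghost Poisson bracket. -/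
/-- Homogeneous superfunction on `ℝ^{2|1}` with coordinates `(p,q,τ)`:
a pair `(F, ε)` representing `F(p,q)` if `ε = 0` and `τ·F(p,q)` if `ε = 1`. -/
structure SF2 where
  fn : ℝ → ℝ → ℝ
  par : ZMod 2

/-- Partial derivative in `p`. -/
noncomputable def dp (F : ℝ → ℝ → ℝ) : ℝ → ℝ → ℝ := fun p q => deriv (fun p' => F p' q) p

/-- Partial derivative in `q`. -/
noncomputable def dq (F : ℝ → ℝ → ℝ) : ℝ → ℝ → ℝ := fun p q => deriv (fun q' => F p q') q

/-- The even Poisson bracket `{F,G}_{pq} = F_p G_q − F_q G_p`. -/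
noncomputable def pqBr (F G : ℝ → ℝ → ℝ) : ℝ → ℝ → ℝ :=
  fun p q => dp F p q * dq G p q - dq F p q * dp G p q

/-- The even Euler field `E₀ = p ∂_p + q ∂_q`. -/
noncomputable def E0 (F : ℝ → ℝ → ℝ) : ℝ → ℝ → ℝ := fun p q => p * dp F p q + q * dq F p q

noncomputable def SF2.smul (c : ℝ) (F : SF2) : SF2 := ⟨fun p q => c * F.fn p q, F.par⟩

noncomputable def SF2.add (F G : SF2) : SF2 := ⟨fun p q => F.fn p q + G.fn p q, F.par⟩

/-- The super Poisson bracket `{F,G} = F_p G_q − F_q G_p + F_τ G_τ`, componentwise. -/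
noncomputable def Pb (F G : SF2) : SF2 :=
  if F.par = 1 ∧ G.par = 1 then ⟨fun p q => F.fn p q * G.fn p q, 0⟩
  else ⟨pqBr F.fn G.fn, F.par + G.par⟩

/-- The ghost Poisson bracket
`{F,G}_g = F_τ·E(G) − (−1)^{σ(F)} E(F)·G_τ + τ·{F,G}_{pq}`, componentwise. -/
noncomputable def Gb (F G : SF2) : SF2 :=
  if F.par = 0 then
    (if G.par = 0 then ⟨pqBr F.fn G.fn, 1⟩
     else ⟨fun p q => -(E0 F.fn p q) * G.fn p q, 0⟩)
  else
    (if G.par = 0 then ⟨fun p q => F.fn p q * E0 G.fn p q, 0⟩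
     else ⟨fun p q => F.fn p q * (E0 G.fn p q + G.fn p q)
                        + (E0 F.fn p q + F.fn p q) * G.fn p q, 1⟩)

section AuxGhost

open Function

abbrev SM (f : ℝ → ℝ → ℝ) : Prop := ContDiff ℝ (⊤ : ℕ∞) (Function.uncurry f)

lemma SM.diffP {f : ℝ → ℝ → ℝ} (hf : SM f) (q p : ℝ) :
    DifferentiableAt ℝ (fun p' => f p' q) p := by
  have : (fun p' => f p' q) = (Function.uncurry f) ∘ (fun p' => (p', q)) := rfl
  rw [this]
  exact ((hf.differentiable (by simp)).comp
    (differentiable_id.prodMk (differentiable_const q))) p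

lemma SM.diffQ {f : ℝ → ℝ → ℝ} (hf : SM f) (p q : ℝ) :
    DifferentiableAt ℝ (fun q' => f p q') q := by
  have : (fun q' => f p q') = (Function.uncurry f) ∘ (fun q' => (p, q')) := rfl
  rw [this]
  exact ((hf.differentiable (by simp)).comp
    ((differentiable_const p).prodMk differentiable_id)) q

section sect
variable {E : Type*} [NormedAddCommGroup E] [NormedSpace ℝ E]

lemma hasDerivAt_sectP (g : ℝ × ℝ → E) (hg : Differentiable ℝ g) (p q : ℝ) :
    HasDerivAt (fun p' => g (p', q)) (fderiv ℝ g (p, q) (1, 0)) p := by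
  have h1 : HasDerivAt (fun p' : ℝ => (p', q)) ((1 : ℝ), (0 : ℝ)) p :=
    (hasDerivAt_id p).prodMk (hasDerivAt_const p q)
  exact (hg (p, q)).hasFDerivAt.comp_hasDerivAt p h1

lemma hasDerivAt_sectQ (g : ℝ × ℝ → E) (hg : Differentiable ℝ g) (p q : ℝ) :
    HasDerivAt (fun q' => g (p, q')) (fderiv ℝ g (p, q) (0, 1)) q := by
  have h1 : HasDerivAt (fun q' : ℝ => (p, q')) ((0 : ℝ), (1 : ℝ)) q :=
    (hasDerivAt_const q p).prodMk (hasDerivAt_id q)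
  exact (hg (p, q)).hasFDerivAt.comp_hasDerivAt q h1
end sect

lemma dp_eq {f : ℝ → ℝ → ℝ} (hf : SM f) (p q : ℝ) :
    dp f p q = fderiv ℝ (uncurry f) (p, q) (1, 0) :=
  (hasDerivAt_sectP (uncurry f) (hf.differentiable (by simp)) p q).deriv

lemma dq_eq {f : ℝ → ℝ → ℝ} (hf : SM f) (p q : ℝ) :
    dq f p q = fderiv ℝ (uncurry f) (p, q) (0, 1) :=
  (hasDerivAt_sectQ (uncurry f) (hf.differentiable (by simp)) p q).deriv

lemma SM.dp {f : ℝ → ℝ → ℝ} (hf : SM f) : SM (_root_.dp f) := by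
  have h : uncurry (_root_.dp f) = fun x : ℝ × ℝ => fderiv ℝ (uncurry f) x (1, 0) := by
    funext x
    exact dp_eq hf x.1 x.2
  show ContDiff ℝ (⊤ : ℕ∞) (uncurry (_root_.dp f))
  rw [h]
  exact (hf.fderiv_right (by simp)).clm_apply contDiff_const

lemma SM.dq {f : ℝ → ℝ → ℝ} (hf : SM f) : SM (_root_.dq f) := by
  have h : uncurry (_root_.dq f) = fun x : ℝ × ℝ => fderiv ℝ (uncurry f) x (0, 1) := by
    funext x
    exact dq_eq hf x.1 x.2
  show ContDiff ℝ (⊤ : ℕ∞) (uncurry (_root_.dq f))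
  rw [h]
  exact (hf.fderiv_right (by simp)).clm_apply contDiff_const

lemma clairaut {f : ℝ → ℝ → ℝ} (hf : SM f) (p q : ℝ) :
    dq (dp f) p q = dp (dq f) p q := by
  set u := uncurry f with hu
  have hud : Differentiable ℝ u := hf.differentiable (by simp)
  have hu' : ContDiff ℝ (⊤ : ℕ∞) (fderiv ℝ u) := hf.fderiv_right (by simp)
  have hsymm := second_derivative_symmetric (f := u)
    (fun y => (hud y).hasFDerivAt)
    ((hu'.differentiable (by simp) (p, q)).hasFDerivAt)
    ((0 : ℝ), (1 : ℝ)) ((1 : ℝ), (0 : ℝ))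
  have h1 : dq (dp f) p q = fderiv ℝ (fderiv ℝ u) (p, q) (0, 1) (1, 0) := by
    have e : (fun q' => dp f p q') =
        fun q' => (ContinuousLinearMap.apply ℝ ℝ ((1 : ℝ), (0 : ℝ))) (fderiv ℝ u (p, q')) := by
      funext q'
      exact dp_eq hf p q'
    show deriv (fun q' => dp f p q') q = _
    rw [e]
    have hd : HasDerivAt (fun q' => fderiv ℝ u (p, q'))
        (fderiv ℝ (fderiv ℝ u) (p, q) (0, 1)) q :=
      hasDerivAt_sectQ (fderiv ℝ u) (hu'.differentiable (by simp)) p q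
    have hc := ((ContinuousLinearMap.apply ℝ ℝ ((1 : ℝ), (0 : ℝ))).hasFDerivAt.comp_hasDerivAt q hd)
    simpa [Function.comp_def] using hc.deriv
  have h2 : dp (dq f) p q = fderiv ℝ (fderiv ℝ u) (p, q) (1, 0) (0, 1) := by
    have e : (fun p' => dq f p' q) =
        fun p' => (ContinuousLinearMap.apply ℝ ℝ ((0 : ℝ), (1 : ℝ))) (fderiv ℝ u (p', q)) := by
      funext p'
      exact dq_eq hf p' q
    show deriv (fun p' => dq f p' q) p = _
    rw [e]
    have hd : HasDerivAt (fun p' => fderiv ℝ u (p', q))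
        (fderiv ℝ (fderiv ℝ u) (p, q) (1, 0)) p :=
      hasDerivAt_sectP (fderiv ℝ u) (hu'.differentiable (by simp)) p q
    have hc := ((ContinuousLinearMap.apply ℝ ℝ ((0 : ℝ), (1 : ℝ))).hasFDerivAt.comp_hasDerivAt p hd)
    simpa [Function.comp_def] using hc.deriv
  rw [h1, h2, hsymm]

lemma hasD_P {a : ℝ → ℝ → ℝ} (ha : SM a) (p q : ℝ) :
    HasDerivAt (fun p' => a p' q) (dp a p q) p := (ha.diffP q p).hasDerivAt

lemma hasD_Q {a : ℝ → ℝ → ℝ} (ha : SM a) (p q : ℝ) :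
    HasDerivAt (fun q' => a p q') (dq a p q) q := (ha.diffQ p q).hasDerivAt

lemma SM.mul {a b : ℝ → ℝ → ℝ} (ha : SM a) (hb : SM b) :
    SM (fun p q => a p q * b p q) := by
  show ContDiff ℝ (⊤ : ℕ∞) (uncurry fun p q => a p q * b p q)
  have h : (uncurry fun p q => a p q * b p q) = fun x => uncurry a x * uncurry b x := rfl
  rw [h]; exact ContDiff.mul ha hb

lemma SM.add {a b : ℝ → ℝ → ℝ} (ha : SM a) (hb : SM b) :
    SM (fun p q => a p q + b p q) := by
  show ContDiff ℝ (⊤ : ℕ∞) (uncurry fun p q => a p q + b p q)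
  have h : (uncurry fun p q => a p q + b p q) = fun x => uncurry a x + uncurry b x := rfl
  rw [h]; exact ContDiff.add ha hb

lemma SM.neg {a : ℝ → ℝ → ℝ} (ha : SM a) : SM (fun p q => -(a p q)) := by
  show ContDiff ℝ (⊤ : ℕ∞) (uncurry fun p q => -(a p q))
  have h : (uncurry fun p q => -(a p q)) = fun x => -(uncurry a x) := rfl
  rw [h]; exact ContDiff.neg ha

lemma SM.e0 {a : ℝ → ℝ → ℝ} (ha : SM a) : SM (E0 a) := by
  show ContDiff ℝ (⊤ : ℕ∞) (uncurry (E0 a))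
  have h : (uncurry (E0 a)) =
      fun x : ℝ × ℝ => x.1 * uncurry (_root_.dp a) x + x.2 * uncurry (_root_.dq a) x := rfl
  rw [h]
  exact (contDiff_fst.mul ha.dp).add (contDiff_snd.mul ha.dq)

lemma dp_mul {a b : ℝ → ℝ → ℝ} (ha : SM a) (hb : SM b) (p q : ℝ) :
    dp (fun p q => a p q * b p q) p q = dp a p q * b p q + a p q * dp b p q :=
  ((hasD_P ha p q).mul (hasD_P hb p q)).deriv

lemma dq_mul {a b : ℝ → ℝ → ℝ} (ha : SM a) (hb : SM b) (p q : ℝ) :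
    dq (fun p q => a p q * b p q) p q = dq a p q * b p q + a p q * dq b p q :=
  ((hasD_Q ha p q).mul (hasD_Q hb p q)).deriv

lemma dp_add {a b : ℝ → ℝ → ℝ} (ha : SM a) (hb : SM b) (p q : ℝ) :
    dp (fun p q => a p q + b p q) p q = dp a p q + dp b p q :=
  ((hasD_P ha p q).add (hasD_P hb p q)).deriv

lemma dq_add {a b : ℝ → ℝ → ℝ} (ha : SM a) (hb : SM b) (p q : ℝ) :
    dq (fun p q => a p q + b p q) p q = dq a p q + dq b p q :=
  ((hasD_Q ha p q).add (hasD_Q hb p q)).deriv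

lemma dp_neg (a : ℝ → ℝ → ℝ) (p q : ℝ) :
    dp (fun p q => -(a p q)) p q = -dp a p q := deriv.neg

lemma dq_neg (a : ℝ → ℝ → ℝ) (p q : ℝ) :
    dq (fun p q => -(a p q)) p q = -dq a p q := deriv.neg

lemma dp_E0 {a : ℝ → ℝ → ℝ} (ha : SM a) (p q : ℝ) :
    dp (E0 a) p q = dp a p q + p * dp (dp a) p q + q * dp (dq a) p q := by
  have h : dp (E0 a) p q
      = (1 * dp a p q + p * dp (dp a) p q) + q * dp (dq a) p q :=
    (((hasDerivAt_id p).mul (hasD_P ha.dp p q)).add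
      ((hasD_P ha.dq p q).const_mul q)).deriv
  rw [h]; ring

lemma dq_E0 {a : ℝ → ℝ → ℝ} (ha : SM a) (p q : ℝ) :
    dq (E0 a) p q = p * dq (dp a) p q + dq a p q + q * dq (dq a) p q := by
  have h : dq (E0 a) p q
      = p * dq (dp a) p q + (1 * dq a p q + q * dq (dq a) p q) :=
    (((hasD_Q ha.dp p q).const_mul p).add
      ((hasDerivAt_id q).mul (hasD_Q ha.dq p q))).deriv
  rw [h]; ring

lemma dp_pqBr {g h : ℝ → ℝ → ℝ} (hg : SM g) (hh : SM h) (p q : ℝ) :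
    dp (pqBr g h) p q
      = (dp (dp g) p q * dq h p q + dp g p q * dp (dq h) p q)
        - (dp (dq g) p q * dp h p q + dq g p q * dp (dp h) p q) :=
  (((hasD_P hg.dp p q).mul (hasD_P hh.dq p q)).sub
    ((hasD_P hg.dq p q).mul (hasD_P hh.dp p q))).deriv

lemma dq_pqBr {g h : ℝ → ℝ → ℝ} (hg : SM g) (hh : SM h) (p q : ℝ) :
    dq (pqBr g h) p q
      = (dq (dp g) p q * dq h p q + dp g p q * dq (dq h) p q)
        - (dq (dq g) p q * dp h p q + dq g p q * dq (dp h) p q) :=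
  (((hasD_Q hg.dp p q).mul (hasD_Q hh.dq p q)).sub
    ((hasD_Q hg.dq p q).mul (hasD_Q hh.dp p q))).deriv

lemma pqBr_def (a b : ℝ → ℝ → ℝ) (p q : ℝ) :
    pqBr a b p q = dp a p q * dq b p q - dq a p q * dp b p q := rfl

lemma pqBr_swap (a b : ℝ → ℝ → ℝ) (p q : ℝ) :
    pqBr b a p q = -pqBr a b p q := by
  simp only [pqBr]; ring

lemma pqBr_mulL {x a b : ℝ → ℝ → ℝ} (ha : SM a) (hb : SM b) (p q : ℝ) :
    pqBr x (fun p q => a p q * b p q) p q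
      = pqBr x a p q * b p q + a p q * pqBr x b p q := by
  rw [pqBr_def, dp_mul ha hb p q, dq_mul ha hb p q, pqBr_def, pqBr_def]; ring

lemma pqBr_mulLf {a b x : ℝ → ℝ → ℝ} (ha : SM a) (hb : SM b) (p q : ℝ) :
    pqBr (fun p q => a p q * b p q) x p q
      = pqBr a x p q * b p q + a p q * pqBr b x p q := by
  rw [pqBr_def, dp_mul ha hb p q, dq_mul ha hb p q, pqBr_def, pqBr_def]; ring

lemma pqBr_addR {x a b : ℝ → ℝ → ℝ} (ha : SM a) (hb : SM b) (p q : ℝ) :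
    pqBr x (fun p q => a p q + b p q) p q = pqBr x a p q + pqBr x b p q := by
  rw [pqBr_def, dp_add ha hb p q, dq_add ha hb p q, pqBr_def, pqBr_def]; ring

lemma pqBr_negR (x a : ℝ → ℝ → ℝ) (p q : ℝ) :
    pqBr x (fun p q => -(a p q)) p q = -pqBr x a p q := by
  rw [pqBr_def, dp_neg a p q, dq_neg a p q, pqBr_def]; ring

lemma E0_mul {a b : ℝ → ℝ → ℝ} (ha : SM a) (hb : SM b) (p q : ℝ) :
    E0 (fun p q => a p q * b p q) p q = E0 a p q * b p q + a p q * E0 b p q := by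
  show p * dp (fun p q => a p q * b p q) p q + q * dq (fun p q => a p q * b p q) p q = _
  rw [dp_mul ha hb p q, dq_mul ha hb p q]
  show _ = (p * dp a p q + q * dq a p q) * b p q + a p q * (p * dp b p q + q * dq b p q)
  ring

lemma algId (f g h : ℝ → ℝ → ℝ) (p q : ℝ) :
    E0 f p q * pqBr g h p q + pqBr f g p q * E0 h p q - E0 g p q * pqBr f h p q = 0 := by
  simp only [pqBr, E0]; ring

lemma jacobi {f g h : ℝ → ℝ → ℝ} (hf : SM f) (hg : SM g) (hh : SM h) (p q : ℝ) :
    pqBr f (pqBr g h) p q = pqBr (pqBr f g) h p q + pqBr g (pqBr f h) p q := by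
  rw [pqBr_def f (pqBr g h), pqBr_def (pqBr f g) h, pqBr_def g (pqBr f h),
    dp_pqBr hg hh p q, dq_pqBr hg hh p q, dp_pqBr hf hg p q, dq_pqBr hf hg p q,
    dp_pqBr hf hh p q, dq_pqBr hf hh p q,
    clairaut hf p q, clairaut hg p q, clairaut hh p q]
  ring

lemma eulerBr {f g : ℝ → ℝ → ℝ} (hf : SM f) (hg : SM g) (p q : ℝ) :
    E0 (pqBr f g) p q
      = pqBr (E0 f) g p q + pqBr f (E0 g) p q - 2 * pqBr f g p q := by
  show p * dp (pqBr f g) p q + q * dq (pqBr f g) p q = _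
  rw [dp_pqBr hf hg p q, dq_pqBr hf hg p q,
    pqBr_def (E0 f) g, pqBr_def f (E0 g),
    dp_E0 hf p q, dq_E0 hf p q, dp_E0 hg p q, dq_E0 hg p q,
    clairaut hf p q, clairaut hg p q, pqBr_def f g]
  ring

lemma pqBr_smul2L {f g : ℝ → ℝ → ℝ} (hf : SM f)
    (hE : ∀ p q : ℝ, E0 f p q = 2 * f p q) (p q : ℝ) :
    pqBr (E0 f) g p q = 2 * pqBr f g p q := by
  have hEf : E0 f = fun p q => 2 * f p q := funext fun p => funext fun q => hE p q
  have hdp : dp (E0 f) p q = 2 * dp f p q := by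
    rw [hEf]; exact ((hasD_P hf p q).const_mul 2).deriv
  have hdq : dq (E0 f) p q = 2 * dq f p q := by
    rw [hEf]; exact ((hasD_Q hf p q).const_mul 2).deriv
  rw [pqBr_def, hdp, hdq, pqBr_def]; ring

lemma brE0_deg2 {f g : ℝ → ℝ → ℝ} (hf : SM f) (hg : SM g)
    (hE : ∀ p q : ℝ, E0 f p q = 2 * f p q) (p q : ℝ) :
    pqBr f (E0 g) p q = E0 (pqBr f g) p q := by
  have h1 := eulerBr hf hg p q
  have h2 := pqBr_smul2L hf hE p q (g := g)
  linarith

lemma brE0_deg1 {f g : ℝ → ℝ → ℝ} (hf : SM f) (hg : SM g)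
    (hE : ∀ p q : ℝ, E0 f p q = f p q) (p q : ℝ) :
    pqBr f (E0 g) p q = E0 (pqBr f g) p q + pqBr f g p q := by
  have h1 := eulerBr hf hg p q
  have hEf : E0 f = f := funext fun p => funext fun q => hE p q
  have h2 : pqBr (E0 f) g p q = pqBr f g p q := by rw [hEf]
  linarith

end AuxGhost

/-- the ghost Poisson bracket on `ℝ^{2|1}` is invariant under the conformal
superalgebra `K(1)`: for every parity-homogeneous `F`, homogeneous of degree 2 for the
Euler field (componentwise `E₀F = 2F` in parity 0 and `E₀F = F` in parity 1), and all
parity-homogeneous `G`, `H`,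
`{F,{G,H}_g} = (−1)^{σ(F)} {{F,G},H}_g + (−1)^{σ(F)(σ(G)+1)} {G,{F,H}}_g`. -/
theorem ghost_Poisson_K1_invariant (F G H : SF2)
    (hF : ContDiff ℝ (⊤ : ℕ∞) (Function.uncurry F.fn))
    (hG : ContDiff ℝ (⊤ : ℕ∞) (Function.uncurry G.fn))
    (hH : ContDiff ℝ (⊤ : ℕ∞) (Function.uncurry H.fn))
    (hFhom0 : F.par = 0 → ∀ p q : ℝ, E0 F.fn p q = 2 * F.fn p q)
    (hFhom1 : F.par = 1 → ∀ p q : ℝ, E0 F.fn p q = F.fn p q) :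
    Pb F (Gb G H)
      = SF2.add (SF2.smul (sgn F.par) (Gb (Pb F G) H))
          (SF2.smul (sgn2 F.par (G.par + 1)) (Gb G (Pb F H))) := by
  obtain ⟨f, ef⟩ := F
  obtain ⟨g, eg⟩ := G
  obtain ⟨h, eh⟩ := H
  replace hF : SM f := hF
  replace hG : SM g := hG
  replace hH : SM h := hH
  have he : ∀ x : ZMod 2, x = 0 ∨ x = 1 := by decide
  rcases he ef with rfl | rfl <;> rcases he eg with rfl | rfl <;>
      rcases he eh with rfl | rfl <;>
    simp only [Pb, Gb, SF2.add, SF2.smul, sgn, sgn2, SF2.mk.injEq,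
      show ¬((0:ZMod 2)=1) from by decide, show ¬((1:ZMod 2)=0) from by decide,
      show ((1:ZMod 2)+1 = 0) from by decide, show ((0:ZMod 2)+1 = 1) from by decide,
      show ((1:ZMod 2)+0 = 1) from by decide, show ((0:ZMod 2)+0 = 0) from by decide,
      if_true, if_false, false_and, and_true, true_and, and_false, and_self,
      ite_true, ite_false, not_false_iff, eq_self_iff_true]
  -- case (0,0,0)
  · funext p q
    rw [jacobi hF hG hH p q]; ring
  -- case (0,0,1)
  · have hE2 : ∀ p q : ℝ, E0 f p q = 2 * f p q := hFhom0 rfl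
    funext p q
    rw [pqBr_mulL (SM.neg (SM.e0 hG)) hH p q, pqBr_negR f (E0 g) p q,
      brE0_deg2 hF hG hE2 p q]
    ring
  -- case (0,1,0)
  · have hE2 : ∀ p q : ℝ, E0 f p q = 2 * f p q := hFhom0 rfl
    funext p q
    rw [pqBr_mulL hG (SM.e0 hH) p q, brE0_deg2 hF hH hE2 p q]
    ring
  -- case (0,1,1)
  · have hE2 : ∀ p q : ℝ, E0 f p q = 2 * f p q := hFhom0 rfl
    funext p q
    rw [pqBr_addR (SM.mul hG (SM.add (SM.e0 hH) hH)) (SM.mul (SM.add (SM.e0 hG) hG) hH) p q,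
      pqBr_mulL hG (SM.add (SM.e0 hH) hH) p q,
      pqBr_mulL (SM.add (SM.e0 hG) hG) hH p q,
      pqBr_addR (SM.e0 hH) hH p q, pqBr_addR (SM.e0 hG) hG p q,
      brE0_deg2 hF hG hE2 p q, brE0_deg2 hF hH hE2 p q]
    ring
  -- case (1,0,0)
  · have hE1 : ∀ p q : ℝ, E0 f p q = f p q := hFhom1 rfl
    funext p q
    have halg := algId f g h p q
    rw [hE1 p q] at halg
    linear_combination halg
  -- case (1,0,1)
  · have hE1 : ∀ p q : ℝ, E0 f p q = f p q := hFhom1 rfl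
    funext p q
    rw [pqBr_mulL (SM.neg (SM.e0 hG)) hH p q, pqBr_negR f (E0 g) p q,
      brE0_deg1 hF hG hE1 p q, pqBr_mulL hF hH p q, pqBr_swap f g p q]
    have halg := algId f g h p q
    rw [hE1 p q] at halg
    linear_combination halg
  -- case (1,1,0)
  · have hE1 : ∀ p q : ℝ, E0 f p q = f p q := hFhom1 rfl
    funext p q
    rw [pqBr_mulL hG (SM.e0 hH) p q, brE0_deg1 hF hH hE1 p q,
      pqBr_mulLf hF hG p q]
    have halg := algId f g h p q
    rw [hE1 p q] at halg
    linear_combination halg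
  -- case (1,1,1)
  · have hE1 : ∀ p q : ℝ, E0 f p q = f p q := hFhom1 rfl
    funext p q
    rw [E0_mul hF hG p q, E0_mul hF hH p q, hE1 p q]
    ring
end

section
/- On the half-line x > 0, the rescaled ghost bracket ⟨f,g⟩ := −2(f,g) on F_{−1/2}, applied to the basis elements V_n = (x^{n+1/2}, 0) and Ψ_n = (x^n, 1) of weight −1/2, satisfies the relations ⟨V_n,V_m⟩ = (m−n)·Ψ_{n+m}, ⟨Ψ_n,V_m⟩ = V_{n+m} = −⟨V_m,Ψ_n⟩, and ⟨Ψ_n,Ψ_m⟩ = 2·Ψ_{n+m}, for all integers n, m. -/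
/-- Equality of superfunctions on the half-line `x > 0`. -/
def SF.eqPos (f g : SF) : Prop := f.par = g.par ∧ ∀ x : ℝ, 0 < x → f.fn x = g.fn x

/-- The even basis elements `V_n = (x^{n+1/2}, 0)` of `F_{-1/2}`. -/
noncomputable def V (n : ℤ) : SF := ⟨fun x => x ^ ((n : ℝ) + 1/2), 0⟩

/-- The odd basis elements `Ψ_n = (x^n, 1)` of `F_{-1/2}`. -/
noncomputable def Psi (n : ℤ) : SF := ⟨fun x => x ^ n, 1⟩

/-- The rescaled ghost bracket `⟨f,g⟩ = −2(f,g)` on `F_{-1/2}`. -/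
noncomputable def ghalf (f g : SF) : SF := SF.smul (-2) (gbr (-(1/2)) (-(1/2)) f g)

/-
Each parity case of the ghost bracket collapses to a single bilinear expression, the term with
`ξ² = 0` dropping out: at `λ = μ = -1/2` the rescaled bracket `⟨f,g⟩` is `f g' - f' g` on two even
elements, `± f g` on mixed parities and `2 f g` on two odd ones. The relations are then
`x^a x^b = x^(a+b)` for `x > 0` together with `(x^(n+1/2))' = (n+1/2) x^(n-1/2)`.
-/

section Parity

variable {f g : SF}

lemma Dbar_of_par_eq_zero (hf : f.par = 0) : Dbar f = ⟨fun x => -deriv f.fn x, 1⟩ := by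
  simp [Dbar, hf]

lemma Dbar_of_par_eq_one (hf : f.par = 1) : Dbar f = ⟨f.fn, 0⟩ := by
  simp [Dbar, hf]

variable (l m : ℝ)

lemma gbr_of_even_even (hf : f.par = 0) (hg : g.par = 0) :
    gbr l m f g = ⟨fun x => l * f.fn x * deriv g.fn x - m * deriv f.fn x * g.fn x, 1⟩ := by
  simp +decide only [gbr, SF.sub, SF.smul, SF.mul, Dbar_of_par_eq_zero hf, Dbar_of_par_eq_zero hg,
    hf, hg, sgn, SF.mk.injEq, ↓reduceIte, and_true]
  funext x
  ring

lemma gbr_of_odd_even (hf : f.par = 1) (hg : g.par = 0) :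
    gbr l m f g = ⟨fun x => m * f.fn x * g.fn x, 0⟩ := by
  simp +decide only [gbr, SF.sub, SF.smul, SF.mul, Dbar_of_par_eq_one hf, Dbar_of_par_eq_zero hg,
    hf, hg, sgn, SF.mk.injEq, ↓reduceIte, and_true]
  funext x
  ring

lemma gbr_of_even_odd (hf : f.par = 0) (hg : g.par = 1) :
    gbr l m f g = ⟨fun x => -(l * f.fn x * g.fn x), 0⟩ := by
  simp +decide only [gbr, SF.sub, SF.smul, SF.mul, Dbar_of_par_eq_zero hf, Dbar_of_par_eq_one hg,
    hf, hg, sgn, SF.mk.injEq, ↓reduceIte, and_true]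
  funext x
  ring

lemma gbr_of_odd_odd (hf : f.par = 1) (hg : g.par = 1) :
    gbr l m f g = ⟨fun x => (l + m) * f.fn x * g.fn x, 1⟩ := by
  simp +decide only [gbr, SF.sub, SF.smul, SF.mul, Dbar_of_par_eq_one hf, Dbar_of_par_eq_one hg,
    hf, hg, sgn, SF.mk.injEq, ↓reduceIte, and_true]
  funext x
  ring

end Parity

section Rescaled

variable {f g : SF}

lemma ghalf_of_even_even (hf : f.par = 0) (hg : g.par = 0) :
    ghalf f g = ⟨fun x => f.fn x * deriv g.fn x - deriv f.fn x * g.fn x, 1⟩ := by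
  simp only [ghalf, gbr_of_even_even _ _ hf hg, SF.smul, SF.mk.injEq, and_true]
  funext x
  ring

lemma ghalf_of_odd_even (hf : f.par = 1) (hg : g.par = 0) :
    ghalf f g = ⟨fun x => f.fn x * g.fn x, 0⟩ := by
  simp only [ghalf, gbr_of_odd_even _ _ hf hg, SF.smul, SF.mk.injEq, and_true]
  funext x
  ring

lemma ghalf_of_even_odd (hf : f.par = 0) (hg : g.par = 1) :
    ghalf f g = ⟨fun x => -(f.fn x * g.fn x), 0⟩ := by
  simp only [ghalf, gbr_of_even_odd _ _ hf hg, SF.smul, SF.mk.injEq, and_true]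
  funext x
  ring

lemma ghalf_of_odd_odd (hf : f.par = 1) (hg : g.par = 1) :
    ghalf f g = ⟨fun x => 2 * (f.fn x * g.fn x), 1⟩ := by
  simp only [ghalf, gbr_of_odd_odd _ _ hf hg, SF.smul, SF.mk.injEq, and_true]
  funext x
  ring

end Rescaled

lemma deriv_V_fn (n : ℤ) (x : ℝ) :
    deriv (V n).fn x = ((n : ℝ) + 1/2) * x ^ ((n : ℝ) - 1/2) := by
  rw [V, Real.deriv_rpow_const]
  ring_nf

section Basis

variable (n m : ℤ)

lemma ghalf_V_V : SF.eqPos (ghalf (V n) (V m)) (SF.smul ((m : ℝ) - (n : ℝ)) (Psi (n + m))) := by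
  rw [ghalf_of_even_even rfl rfl]
  refine ⟨rfl, fun x hx => ?_⟩
  have h₁ : x ^ ((n : ℝ) + 1/2) * x ^ ((m : ℝ) - 1/2) = x ^ ((n : ℝ) + m) := by
    rw [← Real.rpow_add hx]; ring_nf
  have h₂ : x ^ ((n : ℝ) - 1/2) * x ^ ((m : ℝ) + 1/2) = x ^ ((n : ℝ) + m) := by
    rw [← Real.rpow_add hx]; ring_nf
  dsimp only
  rw [deriv_V_fn, deriv_V_fn]
  simp only [V, Psi, SF.smul, ← Real.rpow_intCast, Int.cast_add]
  linear_combination ((m : ℝ) + 1/2) * h₁ - ((n : ℝ) + 1/2) * h₂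

lemma ghalf_Psi_V : SF.eqPos (ghalf (Psi n) (V m)) (V (n + m)) := by
  rw [ghalf_of_odd_even rfl rfl]
  refine ⟨rfl, fun x hx => ?_⟩
  simp only [V, Psi, ← Real.rpow_intCast, ← Real.rpow_add hx, Int.cast_add]
  ring_nf

lemma ghalf_V_Psi : SF.eqPos (ghalf (V m) (Psi n)) (SF.neg (V (n + m))) := by
  rw [ghalf_of_even_odd rfl rfl]
  refine ⟨rfl, fun x hx => ?_⟩
  simp only [V, Psi, SF.neg, ← Real.rpow_intCast, ← Real.rpow_add hx, Int.cast_add]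
  ring_nf

lemma ghalf_Psi_Psi : SF.eqPos (ghalf (Psi n) (Psi m)) (SF.smul 2 (Psi (n + m))) := by
  rw [ghalf_of_odd_odd rfl rfl]
  exact ⟨rfl, fun x hx => by simp only [Psi, SF.smul, zpow_add₀ hx.ne']⟩

end Basis

/-- on the half-line `x > 0`, the rescaled ghost bracket on `F_{-1/2}`
satisfies `⟨V_n,V_m⟩ = (m−n)Ψ_{n+m}`, `⟨Ψ_n,V_m⟩ = V_{n+m} = −⟨V_m,Ψ_n⟩` and
`⟨Ψ_n,Ψ_m⟩ = 2Ψ_{n+m}` for all integers `n`, `m`. -/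
theorem ghost_bracket_on_basis (n m : ℤ) :
    SF.eqPos (ghalf (V n) (V m)) (SF.smul ((m : ℝ) - (n : ℝ)) (Psi (n + m))) ∧
    SF.eqPos (ghalf (Psi n) (V m)) (V (n + m)) ∧
    SF.eqPos (ghalf (V m) (Psi n)) (SF.neg (V (n + m))) ∧
    SF.eqPos (ghalf (Psi n) (Psi m)) (SF.smul 2 (Psi (n + m))) :=
  ⟨ghalf_V_V n m, ghalf_Psi_V n m, ghalf_V_Psi n m, ghalf_Psi_Psi n m⟩
end

section
/- The ghost bracket restricted to F_{−1/2} has the following two properties: (1) on odd elements it is commutative and associative, i.e. (φ,ψ) = (ψ,φ) and ((φ,ψ),χ) = (φ,(ψ,χ)) for all odd φ, ψ, χ ∈ F_{−1/2}; (2) the action ρ_ψ(v) := (ψ,v) of odd elements on even elements of F_{−1/2} satisfies ρ_φ∘ρ_ψ + ρ_ψ∘ρ_φ = ρ_{(φ,ψ)}, i.e. (φ,(ψ,v)) + (ψ,(φ,v)) = ((φ,ψ),v) for all odd φ, ψ and even v in F_{−1/2}. -/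
/-- The ghost bracket on `F_{-1/2} ⊗ F_{-1/2}` (weights `λ = μ = −1/2`). -/
noncomputable def ghb (f g : SF) : SF := gbr (-(1/2)) (-(1/2)) f g


lemma ghb_oo (f g : ℝ → ℝ) : ghb ⟨f,1⟩ ⟨g,1⟩ = ⟨fun x => -(f x * g x), 1⟩ := by
  simp only [ghb, gbr, SF.sub, SF.smul, SF.mul, Dbar, sgn]
  norm_num
  funext x; ring

lemma ghb_oe (f u : ℝ → ℝ) : ghb ⟨f,1⟩ ⟨u,0⟩ = ⟨fun x => -(1/2) * (f x * u x), 0⟩ := by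
  simp only [ghb, gbr, SF.sub, SF.smul, SF.mul, Dbar, sgn]
  norm_num

/-- on `F_{-1/2}`, (1) the ghost bracket is commutative and associative on
odd elements; (2) the action `ρ_ψ(v) = (ψ,v)` of odd elements on even elements satisfies
`ρ_φ∘ρ_ψ + ρ_ψ∘ρ_φ = ρ_{(φ,ψ)}`. -/
theorem ghost_bracket_odd_action (φ ψ χ v : SF)
    (hφ : ContDiff ℝ (⊤ : ℕ∞) φ.fn) (hψ : ContDiff ℝ (⊤ : ℕ∞) ψ.fn) (hχ : ContDiff ℝ (⊤ : ℕ∞) χ.fn)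
    (hv : ContDiff ℝ (⊤ : ℕ∞) v.fn)
    (hφ1 : φ.par = 1) (hψ1 : ψ.par = 1) (hχ1 : χ.par = 1) (hv0 : v.par = 0) :
    (ghb φ ψ = ghb ψ φ) ∧
    (ghb (ghb φ ψ) χ = ghb φ (ghb ψ χ)) ∧
    (SF.add (ghb φ (ghb ψ v)) (ghb ψ (ghb φ v)) = ghb (ghb φ ψ) v) := by
  obtain ⟨f, fp⟩ := φ
  obtain ⟨g, gp⟩ := ψ
  obtain ⟨h, hp⟩ := χ
  obtain ⟨u, up⟩ := v
  simp only at hφ1 hψ1 hχ1 hv0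
  subst hφ1 hψ1 hχ1 hv0
  refine ⟨?_, ?_, ?_⟩
  · rw [ghb_oo, ghb_oo]; simp only [SF.mk.injEq]
    exact ⟨funext fun x => by ring, trivial⟩
  · rw [ghb_oo, ghb_oo, ghb_oo, ghb_oo]; simp only [SF.mk.injEq]
    exact ⟨funext fun x => by ring, trivial⟩
  · rw [ghb_oe, ghb_oe, ghb_oe, ghb_oe, ghb_oo, ghb_oe]
    simp only [SF.add, SF.mk.injEq]
    exact ⟨funext fun x => by ring, trivial⟩
end

section
/- The ghost bracket restricted to F_{−1/2} has the following two further properties: (3) on even elements it is anti-symmetric, (v,w) = −(w,v), and it is invariant under the odd part: ρ_ψ(v,w) = (ρ_ψ v, w) + (v, ρ_ψ w) for all odd ψ and even v, w in F_{−1/2}, where ρ_ψ(v) := (ψ,v); (4) the Jacobi identity (u,(v,w)) + (v,(w,u)) + (w,(u,v)) = 0 holds for all even u, v, w ∈ F_{−1/2}. -/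
/-- on `F_{-1/2}`, (3) the ghost bracket is anti-symmetric on even
elements and invariant under the action `ρ_ψ(v) = (ψ,v)` of odd elements:
`ρ_ψ(v,w) = (ρ_ψ v, w) + (v, ρ_ψ w)`; (4) the Jacobi identity
`(u,(v,w)) + (v,(w,u)) + (w,(u,v)) = 0` holds on even elements. -/
theorem ghost_bracket_even_properties (ψ u v w : SF)
    (hψ : ContDiff ℝ (⊤ : ℕ∞) ψ.fn) (hu : ContDiff ℝ (⊤ : ℕ∞) u.fn) (hv : ContDiff ℝ (⊤ : ℕ∞) v.fn)
    (hw : ContDiff ℝ (⊤ : ℕ∞) w.fn)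
    (hψ1 : ψ.par = 1) (hu0 : u.par = 0) (hv0 : v.par = 0) (hw0 : w.par = 0) :
    (ghb v w = SF.neg (ghb w v)) ∧
    (ghb ψ (ghb v w) = SF.add (ghb (ghb ψ v) w) (ghb v (ghb ψ w))) ∧
    (SF.add (SF.add (ghb u (ghb v w)) (ghb v (ghb w u))) (ghb w (ghb u v))
      = ⟨fun _ => 0, 0⟩) := by
  obtain ⟨p, pp⟩ := ψ
  obtain ⟨a, ap⟩ := u
  obtain ⟨b, bp⟩ := v
  obtain ⟨c, cp⟩ := w
  simp only at hψ1 hu0 hv0 hw0 hψ hu hv hw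
  subst hψ1 hu0 hv0 hw0
  have hd : ∀ f g : ℝ → ℝ, ContDiff ℝ (⊤ : ℕ∞) f → ContDiff ℝ (⊤ : ℕ∞) g →
      deriv (fun x => f x * g x) = fun x => deriv f x * g x + f x * deriv g x := by
    intro f g hf hg
    funext x
    exact deriv_fun_mul (hf.differentiable (by simp) x) (hg.differentiable (by simp) x)
  refine ⟨?_, ?_, ?_⟩
  · simp only [ghb, gbr, Dbar, SF.sub, SF.smul, SF.mul, SF.neg, sgn]
    norm_num
    funext x
    ring
  · simp only [ghb, gbr, Dbar, SF.sub, SF.smul, SF.mul, SF.add, sgn]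
    norm_num
    funext x
    rw [hd p b hψ hv, hd p c hψ hw]
    ring
  · simp only [ghb, gbr, Dbar, SF.sub, SF.smul, SF.mul, SF.add, sgn]
    norm_num
    refine ⟨?_, by decide⟩
    funext x
    ring
end

section
/- The symplectic lifting intertwines the first supertransvectant with one half of the super Poisson bracket on ℝ^{2|1}: for all homogeneous densities f ∈ F_λ, g ∈ F_μ (arbitrary parities, arbitrary real weights), one has F_{[f,g]} = (1/2)·{F_f, F_g} as superfunctions on {p > 0}. -/
/-- The symplectic lifting: a density `f ∈ F_λ` of parity `ε` goes to the superfunction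
`F_f = (p^{−2λ−ε} f(q/p), ε)` on `{p > 0}`. -/
noncomputable def lift (l : ℝ) (f : SF) : SF2 :=
  ⟨fun p q => p ^ (-(2 * l) - (f.par.val : ℝ)) * f.fn (q / p), f.par⟩

/-- Equality of superfunctions on `{p > 0}`. -/
def SF2.eqPos (F G : SF2) : Prop :=
  F.par = G.par ∧ ∀ p : ℝ, 0 < p → ∀ q : ℝ, F.fn p q = G.fn p q

lemma zv1 : (((1 : ZMod 2)).val : ℝ) = 1 := by
  norm_num [show (1 : ZMod 2).val = 1 from rfl]

lemma zv2 : (((2 : ZMod 2)).val : ℝ) = 0 := by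
  norm_num [show (2 : ZMod 2).val = 0 from rfl]

lemma zc1 : (ZMod.cast (1 : ZMod 2) : ℝ) = 1 := by
  rw [ZMod.cast_eq_val]; exact zv1

lemma zc2 : (ZMod.cast (2 : ZMod 2) : ℝ) = 0 := by
  rw [ZMod.cast_eq_val]; exact zv2

lemma hasDerivAt_q_lift (f : ℝ → ℝ) (hf : ContDiff ℝ (⊤ : ℕ∞) f) (a p q : ℝ) :
    HasDerivAt (fun q' => p ^ a * f (q' / p)) (p ^ a * (deriv f (q / p) * (1 / p))) q := by
  have h1 : HasDerivAt (fun q' : ℝ => q' / p) (1 / p) q := by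
    simpa using (hasDerivAt_id q).div_const p
  have h2 : HasDerivAt f (deriv f (q / p)) (q / p) :=
    (hf.differentiable (by simp) (q / p)).hasDerivAt
  simpa [Function.comp] using ((h2.comp q h1).const_mul (p ^ a))

lemma hasDerivAt_p_lift (f : ℝ → ℝ) (hf : ContDiff ℝ (⊤ : ℕ∞) f) (a p q : ℝ) (hp : 0 < p) :
    HasDerivAt (fun p' => p' ^ a * f (q / p'))
      (a * p ^ (a - 1) * f (q / p) + p ^ a * (deriv f (q / p) * (-(q / p ^ 2)))) p := by
  have h1 : HasDerivAt (fun p' : ℝ => p' ^ a) (a * p ^ (a - 1)) p :=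
    Real.hasDerivAt_rpow_const (Or.inl hp.ne')
  have h2 : HasDerivAt (fun p' : ℝ => q / p') (-(q / p ^ 2)) p := by
    have := (hasDerivAt_inv hp.ne').const_mul q
    simpa [div_eq_mul_inv, neg_div, mul_div_assoc] using this
  have h3 : HasDerivAt f (deriv f (q / p)) (q / p) :=
    (hf.differentiable (by simp) (q / p)).hasDerivAt
  have h4 := h3.comp p h2
  exact h1.mul h4

lemma pqBr_lift (f g : ℝ → ℝ) (hf : ContDiff ℝ (⊤ : ℕ∞) f) (hg : ContDiff ℝ (⊤ : ℕ∞) g)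
    (a b p q : ℝ) (hp : 0 < p) :
    pqBr (fun p q => p ^ a * f (q / p)) (fun p q => p ^ b * g (q / p)) p q
      = p ^ (a + b - 2) *
        (a * (f (q / p) * deriv g (q / p)) - b * (deriv f (q / p) * g (q / p))) := by
  simp only [pqBr, dp, dq]
  rw [(hasDerivAt_p_lift f hf a p q hp).deriv, (hasDerivAt_p_lift g hg b p q hp).deriv,
    (hasDerivAt_q_lift f hf a p q).deriv, (hasDerivAt_q_lift g hg b p q).deriv]
  have e1 : p ^ (a - 1) = p ^ a / p := by rw [Real.rpow_sub hp, Real.rpow_one]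
  have e2 : p ^ (b - 1) = p ^ b / p := by rw [Real.rpow_sub hp, Real.rpow_one]
  have e3 : p ^ (a + b - 2) = p ^ a * p ^ b / (p * p) := by
    rw [Real.rpow_sub hp, Real.rpow_add hp, show (2 : ℝ) = (1 : ℝ) + 1 by norm_num,
      Real.rpow_add hp, Real.rpow_one]
  rw [e1, e2, e3]
  field_simp
  ring

/-- the symplectic lifting intertwines the first supertransvectant with one
half of the super Poisson bracket: `F_{[f,g]} = (1/2){F_f, F_g}` on `{p > 0}`. -/
theorem lifting_contact_bracket (l m : ℝ) (f g : SF)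
    (hf : ContDiff ℝ (⊤ : ℕ∞) f.fn) (hg : ContDiff ℝ (⊤ : ℕ∞) g.fn) :
    SF2.eqPos (lift (l + m + 1) (cbr l m f g))
      (SF2.smul (1/2) (Pb (lift l f) (lift m g))) := by
  obtain ⟨ffn, fpar⟩ := f
  obtain ⟨gfn, gpar⟩ := g
  simp only at hf hg
  have hc : ∀ x : ZMod 2, x = 0 ∨ x = 1 := by decide
  rcases hc fpar with rfl | rfl <;> rcases hc gpar with rfl | rfl
  · -- (0,0)
    refine ⟨by rfl, fun p hp q => ?_⟩
    simp only [lift, cbr, SF.sub, SF.smul, SF.mul, SF.dx, Dbar, sgn, SF2.smul, Pb, zv1, zv2, zc1, zc2]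
    norm_num [zc1, zc2]
    rw [pqBr_lift ffn gfn hf hg _ _ p q hp]
    have e : -(2 * (l + m + 1)) = -(2 * l) + -(2 * m) - 2 := by ring
    rw [e]
    ring
  · -- (0,1)
    refine ⟨by rfl, fun p hp q => ?_⟩
    simp only [lift, cbr, SF.sub, SF.smul, SF.mul, SF.dx, Dbar, sgn, SF2.smul, Pb, zv1, zv2, zc1, zc2]
    norm_num [zc1, zc2]
    rw [pqBr_lift ffn gfn hf hg _ _ p q hp]
    have e : -(2 * (l + m + 1)) - 1 = -(2 * l) + (-(2 * m) - 1) - 2 := by ring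
    rw [e]
    ring
  · -- (1,0)
    refine ⟨by rfl, fun p hp q => ?_⟩
    simp only [lift, cbr, SF.sub, SF.smul, SF.mul, SF.dx, Dbar, sgn, SF2.smul, Pb, zv1, zv2, zc1, zc2]
    norm_num [zc1, zc2]
    rw [pqBr_lift ffn gfn hf hg _ _ p q hp]
    have e : -(2 * (l + m + 1)) - 1 = (-(2 * l) - 1) + -(2 * m) - 2 := by ring
    rw [e]
    ring
  · -- (1,1)
    refine ⟨by simp only [lift, cbr, SF.sub, SF.smul, SF.mul, SF.dx, SF2.smul, Pb, and_self, ↓reduceIte] <;> decide, fun p hp q => ?_⟩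
    simp only [lift, cbr, SF.sub, SF.smul, SF.mul, SF.dx, Dbar, sgn, SF2.smul, Pb, zv1, zv2, zc1, zc2]
    norm_num [zc1, zc2]
    have e : -(2 * (l + m + 1)) = (-(2 * l) - 1) + (-(2 * m) - 1) := by ring
    rw [e, Real.rpow_add hp]
    ring
end

section
/- The symplectic lifting intertwines the odd supertransvectant with minus one half of the ghost Poisson bracket on ℝ^{2|1}: for all homogeneous densities f ∈ F_λ, g ∈ F_μ (arbitrary parities, arbitrary real weights), one has F_{(f,g)} = −(1/2)·{F_f, F_g}_g as superfunctions on {p > 0}. -/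
section Helpers

lemma hasDerivAt_q_aux (h : ℝ → ℝ) (hh : Differentiable ℝ h) (r p q : ℝ) (hp : 0 < p) :
    HasDerivAt (fun q' => p ^ r * h (q' / p)) (p ^ (r - 1) * deriv h (q / p)) q := by
  have h1 : HasDerivAt (fun q' : ℝ => q' / p) (1 / p) q := by
    simpa using (hasDerivAt_id q).div_const p
  have h2 := ((hh (q / p)).hasDerivAt).comp q h1
  have h3 := h2.const_mul (p ^ r)
  refine h3.congr_deriv (Eq.symm ?_)
  rw [Real.rpow_sub hp, Real.rpow_one]
  field_simp

lemma hasDerivAt_p_aux (h : ℝ → ℝ) (hh : Differentiable ℝ h) (r p q : ℝ) (hp : 0 < p) :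
    HasDerivAt (fun p' => p' ^ r * h (q / p'))
      (p ^ (r - 1) * (r * h (q / p) - (q / p) * deriv h (q / p))) p := by
  have hA : HasDerivAt (fun p' : ℝ => p' ^ r) (r * p ^ (r - 1)) p :=
    Real.hasDerivAt_rpow_const (Or.inl hp.ne')
  have hB : HasDerivAt (fun p' : ℝ => q / p') (q * (-(p ^ 2)⁻¹)) p := by
    simpa [div_eq_mul_inv] using (hasDerivAt_inv hp.ne').const_mul q
  have hC := ((hh (q / p)).hasDerivAt).comp p hB
  have hD := hA.mul hC
  refine hD.congr_deriv (Eq.symm ?_)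
  rw [Function.comp_apply]
  have hr : p ^ r = p ^ (r - 1) * p := by
    calc p ^ r = p ^ (r - 1 + 1) := by norm_num
    _ = p ^ (r - 1) * p ^ (1 : ℝ) := Real.rpow_add hp _ _
    _ = p ^ (r - 1) * p := by rw [Real.rpow_one]
  rw [hr]
  field_simp
  ring

lemma dq_lift (h : ℝ → ℝ) (hh : Differentiable ℝ h) (r p q : ℝ) (hp : 0 < p) :
    dq (fun p q => p ^ r * h (q / p)) p q = p ^ (r - 1) * deriv h (q / p) :=
  (hasDerivAt_q_aux h hh r p q hp).deriv

lemma dp_lift (h : ℝ → ℝ) (hh : Differentiable ℝ h) (r p q : ℝ) (hp : 0 < p) :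
    dp (fun p q => p ^ r * h (q / p)) p q
      = p ^ (r - 1) * (r * h (q / p) - (q / p) * deriv h (q / p)) :=
  (hasDerivAt_p_aux h hh r p q hp).deriv

lemma rpow_pred_mul (p : ℝ) (hp : 0 < p) (r : ℝ) : p ^ (r - 1) * p = p ^ r := by
  calc p ^ (r - 1) * p = p ^ (r - 1) * p ^ (1 : ℝ) := by rw [Real.rpow_one]
  _ = p ^ (r - 1 + 1) := (Real.rpow_add hp _ _).symm
  _ = p ^ r := by norm_num

lemma E0_lift (h : ℝ → ℝ) (hh : Differentiable ℝ h) (r p q : ℝ) (hp : 0 < p) :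
    E0 (fun p q => p ^ r * h (q / p)) p q = r * (p ^ r * h (q / p)) := by
  unfold E0
  rw [dp_lift h hh r p q hp, dq_lift h hh r p q hp, ← rpow_pred_mul p hp r]
  field_simp
  ring

end Helpers

/-- the symplectic lifting intertwines the odd supertransvectant with minus
one half of the ghost Poisson bracket: `F_{(f,g)} = −(1/2){F_f, F_g}_g` on `{p > 0}`. -/
theorem lifting_ghost_bracket (l m : ℝ) (f g : SF)
    (hf : ContDiff ℝ (⊤ : ℕ∞) f.fn) (hg : ContDiff ℝ (⊤ : ℕ∞) g.fn) :
    SF2.eqPos (lift (l + m + 1/2) (gbr l m f g))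
      (SF2.smul (-(1/2)) (Gb (lift l f) (lift m g))) := by
  have hf' : Differentiable ℝ f.fn := hf.differentiable (by simp)
  have hg' : Differentiable ℝ g.fn := hg.differentiable (by simp)
  have hpar : ∀ a : ZMod 2, a = 0 ∨ a = 1 := by decide
  have z10 : ((1 : ZMod 2) = 0) = False := by decide
  have z11 : ((1 : ZMod 2) = 1) = True := by decide
  have z00 : ((0 : ZMod 2) = 0) = True := by decide
  have z01 : ((0 : ZMod 2) = 1) = False := by decide
  have z2 : (1 + 1 : ZMod 2) = 0 := by decide
  rcases hpar f.par with hpf | hpf <;> rcases hpar g.par with hpg | hpg <;>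
    refine ⟨?_, ?_⟩ <;>
    [skip; (intro p hp q); skip; (intro p hp q); skip; (intro p hp q); skip; (intro p hp q)] <;>
    simp only [lift, gbr, Dbar, SF.mul, SF.smul, SF.sub, sgn, Gb, SF2.smul, hpf, hpg,
      z10, z11, z00, z01, z2, true_and, and_true, false_and, and_false, and_self,
      if_true, if_false, ZMod.val_zero, ZMod.val_one, Nat.cast_zero, Nat.cast_one, sub_zero,
      zero_add, add_zero, one_mul]
  case inl.inl.refine_2 =>
    simp only [pqBr]
    rw [dp_lift f.fn hf' (-(2*l)) p q hp, dq_lift g.fn hg' (-(2*m)) p q hp,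
      dq_lift f.fn hf' (-(2*l)) p q hp, dp_lift g.fn hg' (-(2*m)) p q hp,
      show (-(2*(l+m+1/2)) - 1 : ℝ) = (-(2*l) - 1) + (-(2*m) - 1) from by ring,
      Real.rpow_add hp]
    ring
  case inl.inr.refine_2 =>
    rw [E0_lift f.fn hf' (-(2*l)) p q hp,
      show (-(2*(l+m+1/2)) : ℝ) = (-(2*l)) + (-(2*m) - 1) from by ring,
      Real.rpow_add hp]
    ring
  case inr.inl.refine_2 =>
    rw [E0_lift g.fn hg' (-(2*m)) p q hp,
      show (-(2*(l+m+1/2)) : ℝ) = (-(2*l) - 1) + (-(2*m)) from by ring,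
      Real.rpow_add hp]
    ring
  case inr.inr.refine_2 =>
    rw [E0_lift f.fn hf' (-(2*l) - 1) p q hp, E0_lift g.fn hg' (-(2*m) - 1) p q hp,
      show (-(2*(l+m+1/2)) - 1 : ℝ) = (-(2*l) - 1) + (-(2*m) - 1) from by ring,
      Real.rpow_add hp]
    ring
end

section
/- The symplectic lifting intertwines the osp(1|2)-action on weighted densities with the super Poisson action of the odd quadratic Hamiltonians τp and τq: for every homogeneous density f ∈ F_μ (arbitrary parity, arbitrary real weight μ) one has, on {p > 0}, {(p,1), F_f} = F_{L_D f} and {(q,1), F_f} = F_{L_{xD} f}, where L_D(f,0) = (f′,1), L_D(f,1) = (f,0), L_{xD}(f,0) = (x f′ + 2μ f, 1), L_{xD}(f,1) = (x f, 0), and L_D f, L_{xD} f are again regarded as elements of F_μ of the opposite parity. -/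
/-- Lie derivative of `μ`-densities along `D = ∂_ξ + ξ∂_x`:
`L_D(f,0) = (f′,1)`, `L_D(f,1) = (f,0)`. -/
noncomputable def LD (f : SF) : SF :=
  if f.par = 0 then ⟨deriv f.fn, 1⟩ else ⟨f.fn, 0⟩

/-- Lie derivative of `μ`-densities along `xD`:
`L_{xD}(f,0) = (x f′ + 2μ f, 1)`, `L_{xD}(f,1) = (x f, 0)`. -/
noncomputable def LxD (m : ℝ) (f : SF) : SF :=
  if f.par = 0 then ⟨fun x => x * deriv f.fn x + 2 * m * f.fn x, 1⟩
  else ⟨fun x => x * f.fn x, 0⟩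

lemma deriv_q_aux (f : ℝ → ℝ) (hf : Differentiable ℝ f) (r p q : ℝ) :
    deriv (fun q' => p ^ r * f (q' / p)) q = p ^ r * (deriv f (q / p) * p⁻¹) := by
  have h1 : HasDerivAt (fun q' : ℝ => q' / p) p⁻¹ q := by
    simpa using (hasDerivAt_id q).div_const p
  have h2 := ((hf (q / p)).hasDerivAt.comp q h1).const_mul (p ^ r)
  simpa [Function.comp, mul_assoc] using h2.deriv

lemma deriv_p_aux (f : ℝ → ℝ) (hf : Differentiable ℝ f) (r p q : ℝ) (hp : 0 < p) :
    deriv (fun p' => p' ^ r * f (q / p')) p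
      = r * p ^ (r - 1) * f (q / p) + p ^ r * (deriv f (q / p) * (q * (-(p ^ 2)⁻¹))) := by
  have h1 : HasDerivAt (fun p' : ℝ => p' ^ r) (r * p ^ (r - 1)) p :=
    Real.hasDerivAt_rpow_const (Or.inl hp.ne')
  have h2 : HasDerivAt (fun p' : ℝ => q / p') (q * (-(p ^ 2)⁻¹)) p := by
    simpa [div_eq_mul_inv] using (hasDerivAt_inv hp.ne').const_mul q
  have h3 := (hf (q / p)).hasDerivAt.comp p h2
  simpa [Function.comp, mul_assoc] using
    (show HasDerivAt (fun p' : ℝ => p' ^ r * f (q / p')) _ p from h1.mul h3).deriv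

/-- the symplectic lifting intertwines the osp(1|2)-action on weighted
densities with the super Poisson action of the odd quadratic Hamiltonians `τp`, `τq`:
`{(p,1), F_f} = F_{L_D f}` and `{(q,1), F_f} = F_{L_{xD} f}` on `{p > 0}`. -/
theorem lifting_osp_action (m : ℝ) (f : SF) (hf : ContDiff ℝ (⊤ : ℕ∞) f.fn) :
    SF2.eqPos (Pb ⟨fun p _ => p, 1⟩ (lift m f)) (lift m (LD f)) ∧
    SF2.eqPos (Pb ⟨fun _ q => q, 1⟩ (lift m f)) (lift m (LxD m f)) := by
  obtain ⟨fn, par⟩ := f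
  have hd : Differentiable ℝ fn := hf.differentiable (by simp)
  have hc : (ZMod.cast (1 : ZMod 2) : ℝ) = 1 := by
    rw [← ZMod.natCast_val]; norm_num [ZMod.val_one]
  have hpar : par = 0 ∨ par = 1 := by
    fin_cases par
    · exact Or.inl rfl
    · exact Or.inr rfl
  rcases hpar with h | h <;> subst h
  · constructor
    · refine ⟨by simp [Pb, lift, LD], ?_⟩
      intro p hp q
      simp only [Pb, lift, LD, pqBr, dp, dq]
      norm_num [hc]
      simp only [pqBr, dp, dq, deriv_id'', deriv_const', one_mul, zero_mul, mul_zero,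
        sub_zero, zero_sub]
      rw [deriv_q_aux fn hd (-(2 * m)) p q, Real.rpow_sub hp (-(2 * m)) 1, Real.rpow_one]
      field_simp
    · refine ⟨by simp [Pb, lift, LxD], ?_⟩
      intro p hp q
      simp only [Pb, lift, LxD, pqBr, dp, dq]
      norm_num [hc]
      simp only [pqBr, dp, dq, deriv_id'', deriv_const', one_mul, zero_mul, mul_zero,
        sub_zero, zero_sub]
      rw [deriv_p_aux fn hd (-(2 * m)) p q hp, Real.rpow_sub hp (-(2 * m)) 1, Real.rpow_one]
      field_simp
      ring
  · constructor
    · refine ⟨by simp [Pb, lift, LD], ?_⟩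
      intro p hp q
      simp only [Pb, lift, LD]
      norm_num [hc]
      rw [Real.rpow_sub hp (-(2 * m)) 1, Real.rpow_one]
      field_simp
    · refine ⟨by simp [Pb, lift, LxD], ?_⟩
      intro p hp q
      simp only [Pb, lift, LxD]
      norm_num [hc]
      rw [Real.rpow_sub hp (-(2 * m)) 1, Real.rpow_one]
      field_simp
end
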